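/- The Jacobi–Anger expansion: for all complex x and real θ, exp(i x sin θ) = ∑_{n ∈ ℤ} J_n(x) e^{inθ}, where the sum over ℤ converges unconditionally. -/

import Mathlib

/-!
Write `t = e^{iθ}` and `c = x / 2`, so that `e^{i x sin θ} = e^{c t} e^{-c / t}`. Multiplying the two
exponential series gives an absolutely convergent double series over `(j, k) ∈ ℕ × ℕ` whose term is a
multiple of `t ^ (j - k)`. Grouping the terms by `n = j - k` (with `m = min j k` running along each
fibre) turns the fibre over `n` into the power series of `J_n(x)` times `t ^ n`.
-/

open scoped Real

/-- Bessel function of the first kind of natural order `n`, via its power series. -/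
noncomputable def besselJNat (n : ℕ) (x : ℂ) : ℂ :=
  ∑' m : ℕ, (-1 : ℂ) ^ m / ((m.factorial : ℂ) * ((m + n).factorial : ℂ)) * (x / 2) ^ (2 * m + n)

/-- Bessel function of the first kind of integer order, with `J_{-n} = (-1)^n J_n`. -/
noncomputable def besselJ (n : ℤ) (x : ℂ) : ℂ :=
  if 0 ≤ n then besselJNat n.toNat x else (-1 : ℂ) ^ n.natAbs * besselJNat n.natAbs x

open scoped Nat

open Complex

lemma besselJ_of_nonneg {n : ℤ} (hn : 0 ≤ n) (x : ℂ) : besselJ n x = besselJNat n.toNat x :=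
  if_pos hn

lemma besselJ_of_neg {n : ℤ} (hn : n < 0) (x : ℂ) :
    besselJ n x = (-1) ^ n.natAbs * besselJNat n.natAbs x :=
  if_neg hn.not_ge

/-- `(n, m) ↦ (j, k)` with `j - k = n` and `min j k = m`. -/
def intProdNatEquiv : ℤ × ℕ ≃ ℕ × ℕ where
  toFun p := if 0 ≤ p.1 then (p.2 + p.1.toNat, p.2) else (p.2, p.2 + p.1.natAbs)
  invFun q := ((q.1 : ℤ) - q.2, min q.1 q.2)
  left_inv := by
    rintro ⟨n, m⟩
    by_cases hn : 0 ≤ n <;> simp only [hn, if_true, if_false, Prod.mk.injEq] <;> omega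
  right_inv := by
    rintro ⟨j, k⟩
    by_cases h : (0 : ℤ) ≤ (j : ℤ) - k <;> simp only [h, if_true, if_false, Prod.mk.injEq] <;> omega

lemma intProdNatEquiv_of_nonneg {n : ℤ} (hn : 0 ≤ n) (m : ℕ) :
    intProdNatEquiv (n, m) = (m + n.toNat, m) := if_pos hn

lemma intProdNatEquiv_of_neg {n : ℤ} (hn : n < 0) (m : ℕ) :
    intProdNatEquiv (n, m) = (m, m + n.natAbs) := if_neg hn.not_ge

noncomputable def expProdTerm (a b : ℂ) (q : ℕ × ℕ) : ℂ := a ^ q.1 / q.1 ! * (b ^ q.2 / q.2 !)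

lemma hasSum_expProdTerm (a b : ℂ) : HasSum (expProdTerm a b) (exp a * exp b) := by
  have hasSum_exp (z : ℂ) : HasSum (fun n => z ^ n / n !) (exp z) := by
    rw [exp_eq_exp_ℂ]
    exact NormedSpace.expSeries_div_hasSum_exp z
  exact HasSum.mul (f := fun n => a ^ n / n !) (g := fun n => b ^ n / n !)
    (hasSum_exp a) (hasSum_exp b)
    (summable_mul_of_summable_norm (f := fun n => a ^ n / n !) (g := fun n => b ^ n / n !)
      (NormedSpace.norm_expSeries_div_summable a) (NormedSpace.norm_expSeries_div_summable b))

lemma expProdTerm_mul_neg_div_add_left {c t : ℂ} (ht : t ≠ 0) (m a : ℕ) :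
    expProdTerm (c * t) (-(c / t)) (m + a, m) =
      (-1) ^ m / (m ! * (m + a)!) * c ^ (2 * m + a) * t ^ a := by
  rw [expProdTerm, neg_pow, div_pow, mul_pow, show 2 * m + a = m + m + a by ring, pow_add, pow_add,
    pow_add]
  field_simp
  ring

lemma expProdTerm_mul_neg_div_add_right {c t : ℂ} (ht : t ≠ 0) (m b : ℕ) :
    expProdTerm (c * t) (-(c / t)) (m, m + b) =
      (-1) ^ b * ((-1) ^ m / (m ! * (m + b)!) * c ^ (2 * m + b)) * t⁻¹ ^ b := by
  rw [expProdTerm, neg_pow, div_pow, mul_pow, show 2 * m + b = m + m + b by ring, pow_add, pow_add,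
    pow_add, pow_add, inv_pow]
  field_simp
  ring

lemma tsum_expProdTerm_intProdNatEquiv (x : ℂ) {t : ℂ} (ht : t ≠ 0) (n : ℤ) :
    ∑' m, expProdTerm (x / 2 * t) (-(x / 2 / t)) (intProdNatEquiv (n, m)) =
      besselJ n x * t ^ n := by
  rcases le_or_gt 0 n with hn | hn
  · obtain ⟨a, rfl⟩ := Int.eq_ofNat_of_zero_le hn
    simp only [intProdNatEquiv_of_nonneg hn, besselJ_of_nonneg hn, Int.toNat_natCast,
      expProdTerm_mul_neg_div_add_left ht, tsum_mul_right, zpow_natCast, besselJNat]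
  · obtain ⟨b, rfl⟩ := Int.exists_eq_neg_ofNat hn.le
    simp only [intProdNatEquiv_of_neg hn, besselJ_of_neg hn, Int.natAbs_neg, Int.natAbs_natCast,
      expProdTerm_mul_neg_div_add_right ht, tsum_mul_right, tsum_mul_left, zpow_neg, zpow_natCast,
      inv_pow, besselJNat]

theorem hasSum_besselJ_mul_zpow (x : ℂ) {t : ℂ} (ht : t ≠ 0) :
    HasSum (fun n : ℤ => besselJ n x * t ^ n) (exp (x / 2 * (t - t⁻¹))) := by
  have hprod := hasSum_expProdTerm (x / 2 * t) (-(x / 2 / t))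
  rw [← exp_add, show x / 2 * t + -(x / 2 / t) = x / 2 * (t - t⁻¹) by ring] at hprod
  have hfibres := intProdNatEquiv.hasSum_iff.mpr hprod
  refine hfibres.prod_fiberwise fun n => ?_
  rw [← tsum_expProdTerm_intProdNatEquiv x ht n]
  exact (hfibres.summable.prod_factor n).hasSum

theorem stmt_2 (x : ℂ) (θ : ℝ) :
    HasSum (fun n : ℤ => besselJ n x * Complex.exp (Complex.I * (n : ℂ) * (θ : ℂ)))
      (Complex.exp (Complex.I * x * (Real.sin θ : ℝ))) := by
  have hexp (n : ℤ) : exp (I * n * θ) = exp (I * θ) ^ n := by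
    rw [← exp_int_mul]; ring_nf
  have hsin : I * x * (Real.sin θ : ℝ) = x / 2 * (exp (I * θ) - (exp (I * θ))⁻¹) := by
    rw [ofReal_sin, sin, ← exp_neg]
    ring_nf
    rw [I_sq]
    ring
  simp only [hexp, hsin]
  exact hasSum_besselJ_mul_zpow x (exp_ne_zero _)
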